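/- The pure payoff region of the EWL approach with two-parameter strategies U(θ,α,0) (θ ∈ [0,π], α ∈ [0,2π)) applied to any 2×2 bimatrix game equals the cooperative payoff region, i.e., the convex hull of the four pure payoff vectors {(a_{jk}, b_{jk}) : j,k ∈ {0,1}}. -/

import Mathlib

/-!
The four weights of `ewlV` are squares summing to `1` (they are the outcome probabilities of a
unit state), so every payoff lies in the convex hull. Conversely, when player 2
plays `θ2 = 0` the weights factor as `cos²(θ1/2) · (cos²(α1+α2), sin²(α1+α2))` on `(P00, P11)`
and `sin²(θ1/2) · (cos²α2, sin²α2)` on `(P10, P01)`. The three angles `θ1/2`, `α1 + α2`, `α2`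
are then free in `[0, π/2]`, so every point of a segment joining a point of `[P00, P11]` to a
point of `[P10, P01]` is reached; these segments cover the convex hull.
-/

open Real

/-- The EWL payoff vector for a 2×2 bimatrix game with payoff vectors
`P00 P01 P10 P11 : ℝ × ℝ`, at the profile `(U(θ1,α1,β1), U(θ2,α2,β2))`. -/
noncomputable def ewlV (P00 P01 P10 P11 : ℝ × ℝ) (θ1 α1 β1 θ2 α2 β2 : ℝ) : ℝ × ℝ :=
  ((cos (α1 + α2) * cos (θ1/2) * cos (θ2/2) +
    sin (β1 + β2) * sin (θ1/2) * sin (θ2/2))^2) • P00 +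
  ((sin (α2 - β1) * sin (θ1/2) * cos (θ2/2) +
    cos (α1 - β2) * cos (θ1/2) * sin (θ2/2))^2) • P01 +
  ((cos (α2 - β1) * sin (θ1/2) * cos (θ2/2) +
    sin (α1 - β2) * cos (θ1/2) * sin (θ2/2))^2) • P10 +
  ((cos (β1 + β2) * sin (θ1/2) * sin (θ2/2) -
    sin (α1 + α2) * cos (θ1/2) * cos (θ2/2))^2) • P11

lemma add_smul_four_mem_convexHull {E : Type*} [AddCommGroup E] [Module ℝ E] (a b c d : E)
    {w₀ w₁ w₂ w₃ : ℝ} (h₀ : 0 ≤ w₀) (h₁ : 0 ≤ w₁) (h₂ : 0 ≤ w₂) (h₃ : 0 ≤ w₃)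
    (hw : w₀ + w₁ + w₂ + w₃ = 1) :
    w₀ • a + w₁ • b + w₂ • c + w₃ • d ∈ convexHull ℝ {a, b, c, d} := by
  have := (convex_convexHull ℝ {a, b, c, d}).sum_mem (t := Finset.univ)
    (w := ![w₀, w₁, w₂, w₃]) (z := ![a, b, c, d])
    (by intro i _; fin_cases i <;> assumption)
    (by simpa [Fin.sum_univ_four] using hw)
    (by intro i _; fin_cases i <;> apply subset_convexHull <;> simp)
  simpa [Fin.sum_univ_four] using this

lemma exists_of_mem_convexHull_four {E : Type*} [AddCommGroup E] [Module ℝ E] {a b c d x : E}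
    (hx : x ∈ convexHull ℝ {a, b, c, d}) :
    ∃ y ∈ segment ℝ a d, ∃ z ∈ segment ℝ b c, x ∈ segment ℝ y z := by
  have hsplit : ({a, b, c, d} : Set E) = {a, d} ∪ {b, c} := by
    ext; simp only [Set.mem_insert_iff, Set.mem_singleton_iff, Set.mem_union]; tauto
  rwa [hsplit, convexHull_union (by simp) (by simp), mem_convexJoin, convexHull_pair,
    convexHull_pair] at hx

lemma exists_cos_sq_smul_add_sin_sq_smul_of_mem_segment {E : Type*} [AddCommGroup E]
    [Module ℝ E] {a b z : E} (hz : z ∈ segment ℝ a b) :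
    ∃ φ ∈ Set.Icc 0 (π / 2), z = cos φ ^ 2 • a + sin φ ^ 2 • b := by
  rw [segment_eq_image] at hz
  obtain ⟨t, ⟨ht₀, ht₁⟩, rfl⟩ := hz
  have hsin : sin (arcsin √t) ^ 2 = t := by
    rw [sin_arcsin (by linarith [sqrt_nonneg t]) (sqrt_le_one.mpr ht₁), sq_sqrt ht₀]
  refine ⟨arcsin √t, ⟨arcsin_nonneg.mpr (sqrt_nonneg t), arcsin_le_pi_div_two _⟩, ?_⟩
  rw [cos_sq', hsin]

lemma ewlV_mem_convexHull (P00 P01 P10 P11 : ℝ × ℝ) (θ1 α1 β1 θ2 α2 β2 : ℝ) :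
    ewlV P00 P01 P10 P11 θ1 α1 β1 θ2 α2 β2 ∈ convexHull ℝ {P00, P01, P10, P11} := by
  refine add_smul_four_mem_convexHull _ _ _ _ (sq_nonneg _) (sq_nonneg _) (sq_nonneg _)
    (sq_nonneg _) ?_
  -- the cross terms cancel because `(α2 - β1) + (α1 - β2) = (α1 + α2) - (β1 + β2)`
  have hcross : sin (α2 - β1) * cos (α1 - β2) + cos (α2 - β1) * sin (α1 - β2)
      = sin (α1 + α2) * cos (β1 + β2) - cos (α1 + α2) * sin (β1 + β2) := by
    rw [← sin_add, ← sin_sub]; ring_nf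
  linear_combination
    (cos (θ1/2) * cos (θ2/2)) ^ 2 * sin_sq_add_cos_sq (α1 + α2)
    + (sin (θ1/2) * sin (θ2/2)) ^ 2 * sin_sq_add_cos_sq (β1 + β2)
    + (sin (θ1/2) * cos (θ2/2)) ^ 2 * sin_sq_add_cos_sq (α2 - β1)
    + (cos (θ1/2) * sin (θ2/2)) ^ 2 * sin_sq_add_cos_sq (α1 - β2)
    + 2 * cos (θ1/2) * cos (θ2/2) * sin (θ1/2) * sin (θ2/2) * hcross
    + (sin (θ2/2) ^ 2 + cos (θ2/2) ^ 2) * sin_sq_add_cos_sq (θ1/2)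
    + sin_sq_add_cos_sq (θ2/2)

lemma ewlV_beta_zero_theta2_zero (P00 P01 P10 P11 : ℝ × ℝ) (θ α1 α2 : ℝ) :
    ewlV P00 P01 P10 P11 θ α1 0 0 α2 0 =
      cos (θ/2) ^ 2 • (cos (α1 + α2) ^ 2 • P00 + sin (α1 + α2) ^ 2 • P11)
      + sin (θ/2) ^ 2 • (cos α2 ^ 2 • P10 + sin α2 ^ 2 • P01) := by
  simp only [ewlV, add_zero, sub_zero, zero_div, sin_zero, cos_zero, mul_zero, zero_mul, mul_one]
  module

/-- The pure payoff region of the EWL scheme with two-parameter strategies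
`U(θ,α,0)`, `θ ∈ [0,π]`, `α ∈ [0,2π)`, equals the cooperative payoff region
(the convex hull of the four pure payoff vectors). -/
theorem ewl_two_parameter_payoff_region_eq_convex_hull (P00 P01 P10 P11 : ℝ × ℝ) :
    {x : ℝ × ℝ | ∃ θ1 ∈ Set.Icc 0 π, ∃ α1 ∈ Set.Ico 0 (2*π),
        ∃ θ2 ∈ Set.Icc 0 π, ∃ α2 ∈ Set.Ico 0 (2*π),
        x = ewlV P00 P01 P10 P11 θ1 α1 0 θ2 α2 0} =
      convexHull ℝ {P00, P01, P10, P11} := by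
  ext x
  constructor
  · rintro ⟨θ1, -, α1, -, θ2, -, α2, -, rfl⟩
    exact ewlV_mem_convexHull P00 P01 P10 P11 θ1 α1 0 θ2 α2 0
  · intro hx
    have hπ := pi_pos
    obtain ⟨y, hy, z, hz, hyz⟩ := exists_of_mem_convexHull_four hx
    rw [segment_symm] at hz
    obtain ⟨φ, ⟨hφ₀, hφ₁⟩, rfl⟩ := exists_cos_sq_smul_add_sin_sq_smul_of_mem_segment hyz
    obtain ⟨χ, ⟨hχ₀, hχ₁⟩, rfl⟩ := exists_cos_sq_smul_add_sin_sq_smul_of_mem_segment hy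
    obtain ⟨ψ, ⟨hψ₀, hψ₁⟩, rfl⟩ := exists_cos_sq_smul_add_sin_sq_smul_of_mem_segment hz
    -- shifting `α1 + α2 = χ` by `π` keeps `α1` inside `[0, 2π)` without changing the squares
    refine ⟨2 * φ, ⟨by linarith, by linarith⟩, χ + π - ψ, ⟨by linarith, by linarith⟩,
      0, ⟨le_rfl, hπ.le⟩, ψ, ⟨hψ₀, by linarith⟩, ?_⟩
    rw [ewlV_beta_zero_theta2_zero, sub_add_cancel, sin_add_pi, cos_add_pi, neg_sq, neg_sq,
      mul_div_cancel_left₀ φ two_ne_zero]
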